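/- For any A ∈ M_n(ℂ), the normalized numerical range F_N(A) equals the image of DW(A) ∩ {v : v_3 > 0} under the map h(v) = v_3^{-1/2}(v_1 + i v_2). -/

import Mathlib

/-
`fN A` is invariant under nonzero scalings of `x`, so all its values are attained on unit vectors.
On a unit vector `x`, `h` maps the point `(Re ⟪x, Ax⟫, Im ⟪x, Ax⟫, ‖Ax‖²)` of `DW A` to
`⟪x, Ax⟫ / ‖Ax‖ = fN A x`, and the last coordinate is positive exactly when `Ax ≠ 0`.
-/

open Matrix

noncomputable def fN {n : ℕ} (A : Matrix (Fin n) (Fin n) ℂ)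
    (x : EuclideanSpace ℂ (Fin n)) : ℂ :=
  (inner ℂ x (Matrix.toEuclideanLin A x) : ℂ) /
    ((‖x‖ * ‖Matrix.toEuclideanLin A x‖ : ℝ) : ℂ)

noncomputable def FN {n : ℕ} (A : Matrix (Fin n) (Fin n) ℂ) : Set ℂ :=
  {z | ∃ x : EuclideanSpace ℂ (Fin n), Matrix.toEuclideanLin A x ≠ 0 ∧ z = fN A x}

noncomputable def DW {n : ℕ} (A : Matrix (Fin n) (Fin n) ℂ) : Set (ℝ × ℝ × ℝ) :=
  {v | ∃ x : EuclideanSpace ℂ (Fin n), ‖x‖ = 1 ∧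
    v = ((inner ℂ x (Matrix.toEuclideanLin A x) : ℂ).re,
         (inner ℂ x (Matrix.toEuclideanLin A x) : ℂ).im,
         ‖Matrix.toEuclideanLin A x‖ ^ 2)}

noncomputable def hmap (v : ℝ × ℝ × ℝ) : ℂ :=
  ((v.1 : ℂ) + (v.2.1 : ℂ) * Complex.I) / ((Real.sqrt v.2.2 : ℝ) : ℂ)

noncomputable def dwPoint {n : ℕ} (A : Matrix (Fin n) (Fin n) ℂ) (x : EuclideanSpace ℂ (Fin n)) :
    ℝ × ℝ × ℝ :=
  ((inner ℂ x (toEuclideanLin A x) : ℂ).re, (inner ℂ x (toEuclideanLin A x) : ℂ).im,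
    ‖toEuclideanLin A x‖ ^ 2)

section

variable {n : ℕ} (A : Matrix (Fin n) (Fin n) ℂ) (x : EuclideanSpace ℂ (Fin n))

lemma fN_smul {c : ℂ} (hc : c ≠ 0) : fN A (c • x) = fN A x := by
  have hnorm : (‖c‖ : ℂ) ^ 2 ≠ 0 := by simpa using hc
  simp only [fN, map_smul, inner_smul_left, inner_smul_right, norm_smul, ← mul_assoc,
    Complex.mul_conj']
  push_cast
  rw [show (‖c‖ : ℂ) * ‖x‖ * ‖c‖ * ‖toEuclideanLin A x‖
      = (‖c‖ : ℂ) ^ 2 * (‖x‖ * ‖toEuclideanLin A x‖) by ring, mul_div_mul_left _ _ hnorm]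

lemma dwPoint_pos_iff : 0 < (dwPoint A x).2.2 ↔ toEuclideanLin A x ≠ 0 := by
  simp [dwPoint, sq_pos_iff]

lemma hmap_dwPoint (hx : ‖x‖ = 1) :
    hmap (dwPoint A x) = fN A x := by
  simp only [hmap, dwPoint, fN, hx, one_mul, Real.sqrt_sq (norm_nonneg _), Complex.re_add_im]

end

theorem stmt10 {n : ℕ} (A : Matrix (Fin n) (Fin n) ℂ) :
    FN A = hmap '' (DW A ∩ {v : ℝ × ℝ × ℝ | 0 < v.2.2}) := by
  ext z
  constructor
  · rintro ⟨x, hAx, rfl⟩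
    have hx : x ≠ 0 := by rintro rfl; exact hAx (map_zero _)
    have hc : (‖x‖ : ℂ)⁻¹ ≠ 0 := by simpa using hx
    have hy := norm_smul_inv_norm (𝕜 := ℂ) hx
    have hAy : toEuclideanLin A ((‖x‖ : ℂ)⁻¹ • x) ≠ 0 := by
      rw [map_smul]; exact smul_ne_zero hc hAx
    exact ⟨dwPoint A _, ⟨⟨_, hy, rfl⟩, (dwPoint_pos_iff A _).2 hAy⟩,
      (hmap_dwPoint A _ hy).trans (fN_smul A x hc)⟩
  · rintro ⟨_, ⟨⟨x, hx, rfl⟩, hpos⟩, rfl⟩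
    exact ⟨x, (dwPoint_pos_iff A x).1 hpos, hmap_dwPoint A x hx⟩
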